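/- arXiv:2210.03604 — 5 statements merged into one kernel-verified Lean document; each statement's English description precedes it below -/
import Mathlib

section
/- Closed form of the battery model recurrence (Lemma 1): For every k ∈ ℕ, the state ŝ_k defined by the battery model recurrence satisfies ŝ_k = (1 − b)^{q_0^k} s₀ + Σ_{l=0}^{k−1} (1 − b)^{q_{l+1}^k} ( f_l · b · χ_{r_l} + a⁺ r_l⁺ + a⁻ r_l⁻ + f_{l+1} − f_l ), where q_l^k = Σ_{i=l}^{k−1} χ_{r_i}. -/
/-!
Each step of the recurrence is affine in the state: when `r t = 0` the state is multiplied by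
`1 - b`, otherwise by `1 = (1 - b) ^ 0`. Unrolling an affine recurrence
`x (t + 1) = c t * x t + u t` gives `x k = (∏_{i<k} c i) x 0 + ∑_{l<k} (∏_{l<i<k} c i) u l`, and
the products of powers of `1 - b` collapse to powers with exponents `q_l^k`.
-/

open Finset

theorem affine_recurrence_closed_form {R : Type*} [CommSemiring R] (x c u : ℕ → R)
    (hrec : ∀ t, x (t + 1) = c t * x t + u t) (k : ℕ) :
    x k = (∏ i ∈ range k, c i) * x 0 + ∑ l ∈ range k, (∏ i ∈ Ico (l + 1) k, c i) * u l := by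
  induction k with
  | zero => simp
  | succ k ih =>
    have hterm : ∀ l ∈ range k, (∏ i ∈ Ico (l + 1) (k + 1), c i) * u l
        = c k * ((∏ i ∈ Ico (l + 1) k, c i) * u l) := fun l hl => by
      rw [prod_Ico_succ_top (mem_range.mp hl)]
      ring
    rw [hrec, ih, prod_range_succ, sum_range_succ, Ico_self, prod_empty, one_mul,
      sum_congr rfl hterm, ← mul_sum]
    ring

theorem battery_step_eq_affine (b ap am r shat f f' : ℝ) :
    shat + ap * max r 0 + am * min r 0 + b * (f - shat) * (if r = 0 then (1 : ℝ) else 0) + f' - f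
      = (1 - b) ^ (if r = 0 then 1 else 0) * shat
        + (f * b * (if r = 0 then (1 : ℝ) else 0) + ap * max r 0 + am * min r 0 + f' - f) := by
  split_ifs <;> ring

/-- Lemma 1: closed form of the battery model recurrence. -/
theorem battery_closed_form (s₀ b ap am : ℝ) (r f : ℕ → ℝ)
    (shat : ℕ → ℝ) (h0 : shat 0 = s₀)
    (hrec : ∀ t, shat (t + 1) =
      shat t + ap * max (r t) 0 + am * min (r t) 0
        + b * (f t - shat t) * (if r t = 0 then (1 : ℝ) else 0) + f (t + 1) - f t)
    (k : ℕ) :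
    shat k = (1 - b) ^ (∑ i ∈ Finset.Ico 0 k, if r i = 0 then (1 : ℕ) else 0) * s₀
      + ∑ l ∈ Finset.range k,
          (1 - b) ^ (∑ i ∈ Finset.Ico (l + 1) k, if r i = 0 then (1 : ℕ) else 0) *
            (f l * b * (if r l = 0 then (1 : ℝ) else 0)
              + ap * max (r l) 0 + am * min (r l) 0 + f (l + 1) - f l) := by
  have haffine := affine_recurrence_closed_form shat (fun t => (1 - b) ^ (if r t = 0 then 1 else 0))
    (fun t => f t * b * (if r t = 0 then (1 : ℝ) else 0)
      + ap * max (r t) 0 + am * min (r t) 0 + f (t + 1) - f t)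
    (fun t => (hrec t).trans (battery_step_eq_affine ..)) k
  simpa only [prod_pow_eq_pow_sum, range_eq_Ico, h0] using haffine
end

section
/- Evolution of the battery model during a pure request period: if r_i ≠ 0 for all i < k, then the state of the battery model recurrence satisfies ŝ_k = s₀ + a⁺ Σ_{i=0}^{k−1} r_i⁺ + a⁻ Σ_{i=0}^{k−1} r_i⁻ + f_k − f_0. In particular, if additionally r_i > 0 for all i < k and Σ_{i=0}^{k−1} r_i ≠ 0, then a⁺ = ((ŝ_k − f_k) − (s₀ − f_0)) / Σ_{i=0}^{k−1} r_i. -/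
open Finset

/-! While no request is zero, the self-discharge term `b (f_t - ŝ_t) χ_{r_t}` vanishes, so the
offset `ŝ_t - f_t` grows by exactly `a⁺ r_t⁺ + a⁻ r_t⁻` per step and telescopes. If moreover all
requests are positive, then `r_t⁺ = r_t` and `r_t⁻ = 0`, and the formula for `a⁺` is read off. -/

section

variable {ι M : Type*} [AddCommMonoid M] [LinearOrder M] {s : Finset ι} {r : ι → M}

theorem Finset.sum_max_zero_of_nonneg (h : ∀ i ∈ s, 0 ≤ r i) :
    ∑ i ∈ s, max (r i) 0 = ∑ i ∈ s, r i :=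
  sum_congr rfl fun i hi => max_eq_left (h i hi)

theorem Finset.sum_min_zero_of_nonneg (h : ∀ i ∈ s, 0 ≤ r i) :
    ∑ i ∈ s, min (r i) 0 = 0 :=
  sum_eq_zero fun i hi => min_eq_right (h i hi)

end

/-- Evolution of the battery model during a pure request period, and the
resulting sample formula for `a⁺`. -/
theorem battery_pure_request (s₀ b ap am : ℝ) (r f : ℕ → ℝ)
    (shat : ℕ → ℝ) (h0 : shat 0 = s₀)
    (hrec : ∀ t, shat (t + 1) =
      shat t + ap * max (r t) 0 + am * min (r t) 0
        + b * (f t - shat t) * (if r t = 0 then (1 : ℝ) else 0) + f (t + 1) - f t)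
    (k : ℕ) (hr : ∀ i < k, r i ≠ 0) :
    shat k = s₀ + ap * ∑ i ∈ Finset.range k, max (r i) 0
        + am * ∑ i ∈ Finset.range k, min (r i) 0 + f k - f 0
      ∧ ((∀ i < k, 0 < r i) → (∑ i ∈ Finset.range k, r i) ≠ 0 →
          ap = ((shat k - f k) - (s₀ - f 0)) / ∑ i ∈ Finset.range k, r i) := by
  have hstep : ∀ t ∈ range k, (shat (t + 1) - f (t + 1)) - (shat t - f t) =
      ap * max (r t) 0 + am * min (r t) 0 := by
    intro t ht
    rw [hrec, if_neg (hr t (mem_range.1 ht))]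
    ring
  have hoffset : (shat k - f k) - (s₀ - f 0) =
      ap * ∑ i ∈ range k, max (r i) 0 + am * ∑ i ∈ range k, min (r i) 0 := by
    rw [← h0, ← sum_range_sub (fun t => shat t - f t), sum_congr rfl hstep, sum_add_distrib,
      mul_sum, mul_sum]
  refine ⟨by linarith, fun hpos hne => ?_⟩
  have hnonneg : ∀ i ∈ range k, 0 ≤ r i := fun i hi => (hpos i (mem_range.1 hi)).le
  rw [hoffset, sum_max_zero_of_nonneg hnonneg, sum_min_zero_of_nonneg hnonneg, mul_zero,
    add_zero, mul_div_cancel_right₀ _ hne]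
end

section
/- The capped probability simplex is the convex hull of the uniform j-subset measures: for integers 1 ≤ j ≤ N, the set {q ∈ ℝ^N : q_i ≥ 0 for all i, Σ_{i=1}^N q_i = 1, q_i ≤ 1/j for all i} equals the convex hull of the finite set Q = {q ∈ ℝ^N : there exists J ⊆ {1,…,N} with |J| = j such that q_i = 1/j for i ∈ J and q_i = 0 for i ∉ J}. -/
/-!
The capped simplex is compact and convex, so by Krein–Milman it is the closure of the convex hull
of its extreme points. At an extreme point at most one coordinate lies strictly between `0` and
`1/j`, since otherwise mass can be shifted between two such coordinates in either direction. As
the coordinates sum to `1`, a single such coordinate `x` would make `j * x` an integer strictly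
between `0` and `1`; so every coordinate is `0` or `1/j`, i.e. the point is a uniform `j`-subset
measure. There are finitely many of these, so their convex hull is already closed.
-/

open Finset

theorem eq_zero_of_mem_extremePoints_of_add_mem_of_sub_mem {𝕜 E : Type*} [Field 𝕜]
    [LinearOrder 𝕜] [IsStrictOrderedRing 𝕜] [AddCommGroup E] [Module 𝕜 E] {A : Set E} {x v : E}
    (hx : x ∈ A.extremePoints 𝕜) (hadd : x + v ∈ A) (hsub : x - v ∈ A) : v = 0 := by
  simpa using ((mem_extremePoints.1 hx).2 _ hadd _ hsub (mem_openSegment_add_sub x v)).1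

theorem sum_eq_card_filter_eq_mul_add {ι : Type*} [Fintype ι] (q : ι → ℝ) (c : ℝ) :
    ∑ l, q l = #{l | q l = c} * c + ∑ l with q l ≠ c, q l := by
  rw [← Finset.sum_filter_add_sum_filter_not univ (fun l ↦ q l = c),
    Finset.sum_congr rfl fun l hl ↦ (Finset.mem_filter.1 hl).2, Finset.sum_const, nsmul_eq_mul]

def cappedSimplex (ι : Type*) [Fintype ι] (c : ℝ) : Set (ι → ℝ) :=
  stdSimplex ℝ ι ∩ Set.Iic (fun _ ↦ c)

def uniformSubsetMeasures (ι : Type*) (j : ℕ) : Set (ι → ℝ) :=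
  {q | ∃ J : Finset ι, J.card = j ∧ (∀ i ∈ J, q i = 1 / (j : ℝ)) ∧ ∀ i ∉ J, q i = 0}

section CappedSimplex

variable {ι : Type*} [Fintype ι]

theorem mem_cappedSimplex {c : ℝ} {q : ι → ℝ} :
    q ∈ cappedSimplex ι c ↔ (∀ i, 0 ≤ q i) ∧ ∑ i, q i = 1 ∧ ∀ i, q i ≤ c := by
  simp only [cappedSimplex, stdSimplex, Set.mem_inter_iff, Set.mem_ofPred_eq, Set.mem_Iic,
    Pi.le_def, and_assoc]

theorem isCompact_cappedSimplex (c : ℝ) : IsCompact (cappedSimplex ι c) :=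
  (isCompact_stdSimplex ℝ ι).inter_right isClosed_Iic

theorem convex_cappedSimplex (c : ℝ) : Convex ℝ (cappedSimplex ι c) :=
  (convex_stdSimplex ℝ ι).inter (convex_Iic _)

theorem add_single_sub_single_mem_cappedSimplex [DecidableEq ι] {c ε : ℝ} {q : ι → ℝ}
    (hq : q ∈ cappedSimplex ι c) {i k : ι} (hik : i ≠ k)
    (hi : 0 ≤ q i + ε ∧ q i + ε ≤ c) (hk : 0 ≤ q k - ε ∧ q k - ε ≤ c) :
    q + (Pi.single i ε - Pi.single k ε) ∈ cappedSimplex ι c := by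
  obtain ⟨hq0, hq1, hqc⟩ := mem_cappedSimplex.1 hq
  have hcoord : ∀ l, 0 ≤ q l + ((Pi.single i ε : ι → ℝ) l - (Pi.single k ε : ι → ℝ) l) ∧
      q l + ((Pi.single i ε : ι → ℝ) l - (Pi.single k ε : ι → ℝ) l) ≤ c := by
    intro l
    rcases eq_or_ne l i with rfl | hli
    · simpa [hik] using hi
    rcases eq_or_ne l k with rfl | hlk
    · simpa [hli, sub_eq_add_neg] using hk
    · simpa [hli, hlk] using ⟨hq0 l, hqc l⟩
  refine mem_cappedSimplex.2 ⟨fun l ↦ (hcoord l).1, ?_, fun l ↦ (hcoord l).2⟩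
  simp [Finset.sum_add_distrib, hq1]

theorem subsingleton_setOf_mem_Ioo_of_mem_extremePoints {c : ℝ} {q : ι → ℝ}
    (hq : q ∈ (cappedSimplex ι c).extremePoints ℝ) : {i | q i ∈ Set.Ioo 0 c}.Subsingleton := by
  classical
  intro i ⟨hi0, hic⟩ k ⟨hk0, hkc⟩
  by_contra hik
  set ε := min (min (q i) (c - q i)) (min (q k) (c - q k))
  have hε : 0 < ε := lt_min (lt_min hi0 (sub_pos.2 hic)) (lt_min hk0 (sub_pos.2 hkc))
  have hεi : ε ≤ q i ∧ ε ≤ c - q i :=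
    ⟨(min_le_left _ _).trans (min_le_left _ _), (min_le_left _ _).trans (min_le_right _ _)⟩
  have hεk : ε ≤ q k ∧ ε ≤ c - q k :=
    ⟨(min_le_right _ _).trans (min_le_left _ _), (min_le_right _ _).trans (min_le_right _ _)⟩
  have hadd := add_single_sub_single_mem_cappedSimplex hq.1 hik
    ⟨by linarith, by linarith⟩ ⟨by linarith, by linarith⟩
  have hsub := add_single_sub_single_mem_cappedSimplex hq.1 (Ne.symm hik)
    ⟨by linarith, by linarith⟩ ⟨by linarith, by linarith⟩
  rw [← neg_sub, ← sub_eq_add_neg] at hsub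
  have hv := congrFun (eq_zero_of_mem_extremePoints_of_add_mem_of_sub_mem hq hadd hsub) i
  exact hε.ne' (by simpa [hik] using hv)

theorem forall_eq_zero_or_eq_of_subsingleton_setOf_mem_Ioo {j : ℕ} (hj : j ≠ 0) {q : ι → ℝ}
    (hq : q ∈ cappedSimplex ι (1 / j))
    (hfrac : {i | q i ∈ Set.Ioo 0 (1 / (j : ℝ))}.Subsingleton) :
    ∀ l, q l = 0 ∨ q l = 1 / j := by
  obtain ⟨hq0, hq1, hqc⟩ := mem_cappedSimplex.1 hq
  have htrich : ∀ l, q l ∈ Set.Ioo 0 (1 / (j : ℝ)) ∨ q l = 0 ∨ q l = 1 / j := by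
    intro l
    rcases (hq0 l).eq_or_lt with h0 | h0
    · exact Or.inr (Or.inl h0.symm)
    rcases (hqc l).eq_or_lt with hc | hc
    · exact Or.inr (Or.inr hc)
    · exact Or.inl ⟨h0, hc⟩
  by_contra! ⟨i, hi0, hic⟩
  have hi : q i ∈ Set.Ioo 0 (1 / (j : ℝ)) := (htrich i).resolve_right (by tauto)
  have hsingle : ∑ l with q l ≠ 1 / j, q l = q i :=
    Finset.sum_eq_single_of_mem i (Finset.mem_filter.2 ⟨mem_univ i, hic⟩) fun l hl hli ↦
      ((htrich l).resolve_left fun h ↦ hli (hfrac h hi)).resolve_right (Finset.mem_filter.1 hl).2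
  have hsplit := sum_eq_card_filter_eq_mul_add q (1 / j)
  rw [hq1, hsingle] at hsplit
  set n := #{l | q l = 1 / j}
  have hj' : (0 : ℝ) < j := by positivity
  have hint : (j : ℝ) = n + j * q i := by field_simp at hsplit; linarith
  have hpos : 0 < (j : ℝ) * q i := mul_pos hj' hi.1
  have hlt : (j : ℝ) * q i < 1 := by simpa [hj'.ne'] using mul_lt_mul_of_pos_left hi.2 hj'
  have : n < j := by exact_mod_cast (by linarith : (n : ℝ) < j)
  have : j < n + 1 := by exact_mod_cast (by linarith : (j : ℝ) < n + 1)
  omega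

theorem mem_uniformSubsetMeasures_of_forall_eq_zero_or_eq {j : ℕ} (hj : j ≠ 0) {q : ι → ℝ}
    (hq : ∀ l, q l = 0 ∨ q l = 1 / j) (hq1 : ∑ l, q l = 1) : q ∈ uniformSubsetMeasures ι j := by
  have hrest : ∑ l with q l ≠ 1 / j, q l = 0 :=
    Finset.sum_eq_zero fun l hl ↦ (hq l).resolve_right (Finset.mem_filter.1 hl).2
  have hsplit := sum_eq_card_filter_eq_mul_add q (1 / j)
  rw [hq1, hrest, add_zero, mul_one_div, eq_div_iff (by positivity), one_mul] at hsplit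
  refine ⟨({l | q l = 1 / j} : Finset ι), ?_, fun i hi ↦ (Finset.mem_filter.1 hi).2, fun i hi ↦ ?_⟩
  · exact_mod_cast hsplit.symm
  · exact (hq i).resolve_right fun h ↦ hi (Finset.mem_filter.2 ⟨mem_univ i, h⟩)

theorem extremePoints_cappedSimplex_subset {j : ℕ} (hj : j ≠ 0) :
    (cappedSimplex ι (1 / j)).extremePoints ℝ ⊆ uniformSubsetMeasures ι j := fun _ hq ↦
  mem_uniformSubsetMeasures_of_forall_eq_zero_or_eq hj
    (forall_eq_zero_or_eq_of_subsingleton_setOf_mem_Ioo hj hq.1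
      (subsingleton_setOf_mem_Ioo_of_mem_extremePoints hq))
    (mem_cappedSimplex.1 hq.1).2.1

theorem uniformSubsetMeasures_subset_cappedSimplex {j : ℕ} (hj : j ≠ 0) :
    uniformSubsetMeasures ι j ⊆ cappedSimplex ι (1 / j) := by
  rintro q ⟨J, hJ, hin, hout⟩
  have hcoord : ∀ i, 0 ≤ q i ∧ q i ≤ 1 / j := by
    intro i
    by_cases hi : i ∈ J
    · rw [hin i hi]; exact ⟨by positivity, le_rfl⟩
    · rw [hout i hi]; exact ⟨le_rfl, by positivity⟩
  refine mem_cappedSimplex.2 ⟨fun i ↦ (hcoord i).1, ?_, fun i ↦ (hcoord i).2⟩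
  rw [← Finset.sum_subset J.subset_univ fun i _ hi ↦ hout i hi, Finset.sum_congr rfl hin]
  simp [hJ, hj]

theorem finite_uniformSubsetMeasures (j : ℕ) : (uniformSubsetMeasures ι j).Finite := by
  classical
  refine (Set.finite_range fun J : Finset ι ↦ fun i ↦ if i ∈ J then (1 / j : ℝ) else 0).subset ?_
  rintro q ⟨J, -, hin, hout⟩
  refine ⟨J, funext fun i ↦ ?_⟩
  show (if i ∈ J then _ else _) = q i
  split_ifs with hi
  exacts [(hin i hi).symm, (hout i hi).symm]

end CappedSimplex

theorem capped_simplex_eq_convexHull_uniform_subset_measures_general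
    (N j : ℕ) (hj : 1 ≤ j) :
    {q : Fin N → ℝ | (∀ i, 0 ≤ q i) ∧ (∑ i, q i = 1) ∧ ∀ i, q i ≤ 1 / (j : ℝ)} =
      convexHull ℝ
        {q : Fin N → ℝ | ∃ J : Finset (Fin N), J.card = j ∧
          (∀ i ∈ J, q i = 1 / (j : ℝ)) ∧ ∀ i ∉ J, q i = 0} := by
  have hj0 : j ≠ 0 := by omega
  change _ = convexHull ℝ (uniformSubsetMeasures (Fin N) j)
  rw [show {q : Fin N → ℝ | _} = cappedSimplex (Fin N) (1 / j) from
    Set.ext fun _ ↦ mem_cappedSimplex.symm]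
  refine subset_antisymm ?_
    (convexHull_min (uniformSubsetMeasures_subset_cappedSimplex hj0) (convex_cappedSimplex _))
  calc cappedSimplex (Fin N) (1 / j)
      = closure (convexHull ℝ ((cappedSimplex (Fin N) (1 / j)).extremePoints ℝ)) :=
        (closure_convexHull_extremePoints (isCompact_cappedSimplex _) (convex_cappedSimplex _)).symm
    _ ⊆ closure (convexHull ℝ (uniformSubsetMeasures (Fin N) j)) :=
        closure_mono (convexHull_mono (extremePoints_cappedSimplex_subset hj0))
    _ = convexHull ℝ (uniformSubsetMeasures (Fin N) j) :=
        ((finite_uniformSubsetMeasures j).isClosed_convexHull ℝ).closure_eq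

/-- The capped probability simplex `{q ∈ Δ^N : q_i ≤ 1/j}` is the convex hull of
the uniform `j`-subset measures. -/
theorem capped_simplex_eq_convexHull_uniform_subset_measures
    (N j : ℕ) (hj : 1 ≤ j) (hjN : j ≤ N) :
    {q : Fin N → ℝ | (∀ i, 0 ≤ q i) ∧ (∑ i, q i = 1) ∧ ∀ i, q i ≤ 1 / (j : ℝ)} =
      convexHull ℝ
        {q : Fin N → ℝ | ∃ J : Finset (Fin N), J.card = j ∧
          (∀ i ∈ J, q i = 1 / (j : ℝ)) ∧ ∀ i ∉ J, q i = 0} :=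
  capped_simplex_eq_convexHull_uniform_subset_measures_general N j hj
end

section
/- Theorem (j-point average characterization of the CVaR uncertainty set): Let d_1, …, d_N ∈ ℝ^m be the columns of a matrix D ∈ ℝ^{m×N}, and let 1 ≤ j ≤ N be integers. Then conv({D q : q ∈ ℝ^N, q_i ≥ 0, Σ_{i=1}^N q_i = 1, q_i ≤ 1/j for all i}) = conv({ (1/j) Σ_{i∈J} d_i : J ⊆ {1,…,N}, |J| = j }); that is, the uncertainty set obtained from the generating measures of CVaR with uniform probabilities 1/N and level α = j/N is exactly the convex hull of all j-point averages of the data points d_1, …, d_N. -/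
/-!
Scaling by `j` maps the capped simplex `{q ≥ 0, ∑ q = 1, q ≤ 1/j}` onto the hypersimplex
`{x ∈ [0,1]^N, ∑ x = j}`, and `x ↦ (1/j) • ∑ x i • d i` maps the latter onto the set generating
the left-hand hull while sending its `0/1` points to the `j`-point averages. So it suffices that
the hypersimplex is the convex hull of its `0/1` points, which by Krein–Milman reduces to extreme
points. Since `∑ x` is an integer, a point with one fractional coordinate has a second one, and
shifting mass between the two in either direction writes it as a midpoint of two other points of
the hypersimplex.
-/

open Finset

def hypersimplex (ι : Type*) [Fintype ι] (j : ℕ) : Set (ι → ℝ) :=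
  Set.univ.pi (fun _ => Set.Icc 0 1) ∩ {x | ∑ i, x i = j}

def hypersimplexVertices (ι : Type*) [DecidableEq ι] (j : ℕ) : Set (ι → ℝ) :=
  {x | ∃ J : Finset ι, #J = j ∧ x = fun i => if i ∈ J then 1 else 0}

section Hypersimplex

variable {ι : Type*} [Fintype ι] {j : ℕ}

theorem isCompact_hypersimplex : IsCompact (hypersimplex ι j) :=
  (isCompact_univ_pi fun _ => isCompact_Icc).inter_right <|
    isClosed_eq (continuous_finsetSum _ fun i _ => continuous_apply i) continuous_const

theorem convex_hypersimplex : Convex ℝ (hypersimplex ι j) := by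
  refine (convex_pi fun _ _ => convex_Icc 0 1).inter ?_
  intro x hx y hy a b _ _ hab
  simp only [Set.mem_ofPred_eq, Pi.add_apply, Pi.smul_apply, smul_eq_mul, sum_add_distrib,
    ← mul_sum] at hx hy ⊢
  rw [hx, hy, ← add_mul, hab, one_mul]

theorem exists_ne_mem_Ioo_of_mem_hypersimplex {x : ι → ℝ} (hx : x ∈ hypersimplex ι j) {i : ι}
    (hi : x i ∈ Set.Ioo 0 1) : ∃ k ≠ i, x k ∈ Set.Ioo 0 1 := by
  classical
  by_contra! h
  have h01 : ∀ k ∈ univ.erase i, ∃ n : ℕ, x k = n := by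
    intro k hk
    have : x k ∈ ({0, 1} : Set ℝ) :=
      Set.Icc_sdiff_Ioo_same (zero_le_one' ℝ) ▸ ⟨hx.1 k trivial, h k (ne_of_mem_erase hk)⟩
    rcases this with h0 | (h1 : x k = 1)
    exacts [⟨0, by simp [h0]⟩, ⟨1, by simp [h1]⟩]
  obtain ⟨n, hn⟩ : ∃ n : ℕ, ∑ k ∈ univ.erase i, x k = n :=
    sum_induction _ (fun t : ℝ => ∃ n : ℕ, t = n)
      (fun _ _ ⟨a, ha⟩ ⟨b, hb⟩ => ⟨a + b, by rw [ha, hb, Nat.cast_add]⟩) ⟨0, by simp⟩ h01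
  have hxi : x i = j - n := by
    rw [← hn, ← hx.2, ← add_sum_erase _ _ (mem_univ i), add_sub_cancel_right]
  have hnj : n < j := by exact_mod_cast (sub_pos.1 (hxi ▸ hi.1))
  have hjn : j < n + 1 := by exact_mod_cast (sub_lt_iff_lt_add'.1 (hxi ▸ hi.2))
  omega

theorem add_smul_single_sub_single_mem_hypersimplex [DecidableEq ι] {x : ι → ℝ}
    (hx : x ∈ hypersimplex ι j) {i k : ι} (hik : i ≠ k) {t : ℝ}
    (hi : x i + t ∈ Set.Icc 0 1) (hk : x k - t ∈ Set.Icc 0 1) :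
    x + t • (Pi.single i 1 - Pi.single k 1) ∈ hypersimplex ι j := by
  refine ⟨fun l _ => ?_, ?_⟩
  · rcases eq_or_ne l i with rfl | hli
    · simpa [hik] using hi
    rcases eq_or_ne l k with rfl | hlk
    · simpa [hli, sub_eq_add_neg] using hk
    · simpa [hli, hlk] using hx.1 l trivial
  · have hsum : ∑ l, x l = j := hx.2
    simp [sum_add_distrib, sum_sub_distrib, ← mul_sum, hsum]

theorem eq_zero_or_eq_one_of_mem_extremePoints_hypersimplex {x : ι → ℝ}
    (hx : x ∈ (hypersimplex ι j).extremePoints ℝ) (i : ι) : x i = 0 ∨ x i = 1 := by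
  classical
  by_contra! h
  obtain ⟨hi0, hi1⟩ := hx.1.1 i trivial
  have hi : x i ∈ Set.Ioo 0 1 := ⟨hi0.lt_of_ne' h.1, hi1.lt_of_ne h.2⟩
  obtain ⟨k, hki, hk⟩ := exists_ne_mem_Ioo_of_mem_hypersimplex hx.1 hi
  set ε := min (min (x i) (1 - x i)) (min (x k) (1 - x k))
  have hε : 0 < ε := lt_min (lt_min hi.1 (sub_pos.2 hi.2)) (lt_min hk.1 (sub_pos.2 hk.2))
  have hεi : ε ≤ min (x i) (1 - x i) := min_le_left _ _
  have hεk : ε ≤ min (x k) (1 - x k) := min_le_right _ _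
  rw [le_min_iff] at hεi hεk
  set v : ι → ℝ := Pi.single i 1 - Pi.single k 1
  have hmem : ∀ t, |t| ≤ ε → x + t • v ∈ hypersimplex ι j := fun t ht => by
    obtain ⟨ht₁, ht₂⟩ := abs_le.1 ht
    exact add_smul_single_sub_single_mem_hypersimplex hx.1 hki.symm
      ⟨by linarith, by linarith⟩ ⟨by linarith, by linarith⟩
  have hplus := hmem ε (abs_of_pos hε).le
  have hminus : x - ε • v ∈ hypersimplex ι j := by
    simpa [neg_smul, ← sub_eq_add_neg] using hmem (-ε) (by rw [abs_neg, abs_of_pos hε])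
  have hxv : x + ε • v = x := hx.2 hplus hminus (mem_openSegment_add_sub x _)
  have hvi := congrFun hxv i
  simp [v, hki.symm, hε.ne'] at hvi

theorem extremePoints_hypersimplex_subset [DecidableEq ι] :
    (hypersimplex ι j).extremePoints ℝ ⊆ hypersimplexVertices ι j := by
  intro x hx
  have h01 := eq_zero_or_eq_one_of_mem_extremePoints_hypersimplex hx
  have hx_eq : x = fun i => if i ∈ univ.filter (x · = 1) then 1 else 0 := by
    funext i
    rcases h01 i with h | h <;> simp [h]
  refine ⟨univ.filter (x · = 1), ?_, hx_eq⟩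
  have hsum : ∑ i, x i = j := hx.1.2
  rw [hx_eq] at hsum
  simpa [sum_boole] using hsum

theorem hypersimplex_subset_convexHull [DecidableEq ι] :
    hypersimplex ι j ⊆ convexHull ℝ (hypersimplexVertices ι j) := by
  have hfin : (hypersimplexVertices ι j).Finite :=
    (Set.finite_range fun J : Finset ι => fun i => if i ∈ J then (1 : ℝ) else 0).subset
      fun _ ⟨J, _, hJ⟩ => ⟨J, hJ.symm⟩
  calc hypersimplex ι j
      = closure (convexHull ℝ ((hypersimplex ι j).extremePoints ℝ)) :=
        (closure_convexHull_extremePoints isCompact_hypersimplex convex_hypersimplex).symm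
    _ ⊆ closure (convexHull ℝ (hypersimplexVertices ι j)) :=
        closure_mono (convexHull_mono extremePoints_hypersimplex_subset)
    _ = _ := (hfin.isClosed_convexHull ℝ).closure_eq

end Hypersimplex

theorem sum_smul_mem_convexHull_averages {ι E : Type*} [Fintype ι] [DecidableEq ι]
    [AddCommGroup E] [Module ℝ E] (d : ι → E) {j : ℕ} (hj : j ≠ 0) {q : ι → ℝ}
    (hq₀ : ∀ i, 0 ≤ q i) (hq₁ : ∑ i, q i = 1) (hqj : ∀ i, q i ≤ 1 / (j : ℝ)) :
    ∑ i, q i • d i ∈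
      convexHull ℝ {u | ∃ J : Finset ι, #J = j ∧ u = (1 / (j : ℝ)) • ∑ i ∈ J, d i} := by
  have hj' : (0 : ℝ) < j := by positivity
  set L : (ι → ℝ) →ₗ[ℝ] E := (1 / (j : ℝ)) • Fintype.linearCombination ℝ d
  have hL : ∀ x, L x = (1 / (j : ℝ)) • ∑ i, x i • d i := fun x => by
    simp [L, Fintype.linearCombination_apply]
  have hjq : (j : ℝ) • q ∈ hypersimplex ι j := by
    refine ⟨fun i _ => ⟨by simpa using mul_nonneg hj'.le (hq₀ i), ?_⟩, ?_⟩
    · exact (le_div_iff₀' hj').1 (hqj i)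
    · simp [← mul_sum, hq₁]
  have hLq : L ((j : ℝ) • q) = ∑ i, q i • d i := by
    rw [hL, smul_sum]
    simp [smul_smul, hj'.ne']
  have hLV : L '' hypersimplexVertices ι j ⊆
      {u | ∃ J : Finset ι, #J = j ∧ u = (1 / (j : ℝ)) • ∑ i ∈ J, d i} := by
    rintro _ ⟨_, ⟨J, hJ, rfl⟩, rfl⟩
    exact ⟨J, hJ, by simp [hL, ite_smul, sum_ite_mem]⟩
  rw [← hLq]
  refine convexHull_mono hLV ?_
  rw [← L.image_convexHull]
  exact Set.mem_image_of_mem L (hypersimplex_subset_convexHull hjq)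

theorem uncertainty_set_eq_convexHull_j_point_averages_general
    (m N j : ℕ) (hj : 1 ≤ j)
    (d : Fin N → EuclideanSpace ℝ (Fin m)) :
    convexHull ℝ
        {u : EuclideanSpace ℝ (Fin m) | ∃ q : Fin N → ℝ,
          (∀ i, 0 ≤ q i) ∧ (∑ i, q i = 1) ∧ (∀ i, q i ≤ 1 / (j : ℝ)) ∧
          u = ∑ i, q i • d i} =
      convexHull ℝ
        {u : EuclideanSpace ℝ (Fin m) | ∃ J : Finset (Fin N), J.card = j ∧
          u = (1 / (j : ℝ)) • ∑ i ∈ J, d i} := by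
  have hj₀ : (j : ℝ) ≠ 0 := by positivity
  refine (convexHull_min ?_ (convex_convexHull ℝ _)).antisymm (convexHull_mono ?_)
  · rintro _ ⟨q, hq₀, hq₁, hqj, rfl⟩
    exact sum_smul_mem_convexHull_averages d (by omega) hq₀ hq₁ hqj
  · rintro _ ⟨J, hJ, rfl⟩
    refine ⟨fun i => if i ∈ J then 1 / (j : ℝ) else 0, fun i => ?_, ?_, fun i => ?_, ?_⟩
    · dsimp only; split_ifs <;> positivity
    · simp [sum_ite_mem, hJ, hj₀]
    · dsimp only; split_ifs <;> simp
    · simp [ite_smul, sum_ite_mem, smul_sum]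

/-- The CVaR uncertainty set (image of the capped simplex under the data matrix)
is exactly the convex hull of all `j`-point averages of the data points. -/
theorem uncertainty_set_eq_convexHull_j_point_averages
    (m N j : ℕ) (hj : 1 ≤ j) (hjN : j ≤ N)
    (d : Fin N → EuclideanSpace ℝ (Fin m)) :
    convexHull ℝ
        {u : EuclideanSpace ℝ (Fin m) | ∃ q : Fin N → ℝ,
          (∀ i, 0 ≤ q i) ∧ (∑ i, q i = 1) ∧ (∀ i, q i ≤ 1 / (j : ℝ)) ∧
          u = ∑ i, q i • d i} =
      convexHull ℝ
        {u : EuclideanSpace ℝ (Fin m) | ∃ J : Finset (Fin N), J.card = j ∧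
          u = (1 / (j : ℝ)) • ∑ i ∈ J, d i} :=
  uncertainty_set_eq_convexHull_j_point_averages_general m N j hj d
end

section
/- Robust uncertainty-set reformulation of a single CVaR constraint (finite-space version of Theorem 1): Let d_1, …, d_N ∈ ℝ^m be the columns of D ∈ ℝ^{m×N}, let p ∈ ℝ^N be a probability vector, α ∈ (0,1], and b ∈ ℝ. For x ∈ ℝ^m let X_x : {1,…,N} → ℝ be the random variable X_x(i) = ⟨d_i, x⟩ − b. Then CVaR_α(X_x) ≤ 0 if and only if ⟨u, x⟩ ≥ b for every u ∈ conv({D q : q ∈ Q_α}), where Q_α is the family of generating measures of CVaR_α. -/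
open Finset
open scoped RealInnerProductSpace

/-- Family of generating measures of `CVaR_α` on the finite probability space
`{1,…,N}` with probability vector `p`. -/
def Qset (N : ℕ) (p : Fin N → ℝ) (α : ℝ) : Set (Fin N → ℝ) :=
  {q | (∀ i, 0 ≤ q i) ∧ (∑ i, q i = 1) ∧ ∀ i, q i ≤ p i / α}

/-- Conditional Value at Risk of a random variable `X : {1,…,N} → ℝ`,
`CVaR_α(X) = max_{q ∈ Q_α} (1/N) ∑ᵢ -qᵢ X(i)`. -/
noncomputable def CVaR (N : ℕ) (p : Fin N → ℝ) (α : ℝ) (X : Fin N → ℝ) : ℝ :=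
  sSup ((fun q : Fin N → ℝ => (1 / (N : ℝ)) * ∑ i, (-q i) * X i) '' Qset N p α)

/-! For `q ∈ Q_α` the CVaR objective `(1/N) ∑ᵢ -qᵢ (⟪dᵢ, x⟫ - b)` equals `(b - ⟪D q, x⟫) / N`, and
`Q_α` is bounded (its elements are probability vectors), so `CVaR_α ≤ 0` says exactly that
`⟪D q, x⟫ ≥ b` for all `q ∈ Q_α`. Since `{u | b ≤ ⟪u, x⟫}` is a half-space, it contains
`{D q : q ∈ Q_α}` iff it contains its convex hull. -/

theorem Real.sSup_nonpos_iff {s : Set ℝ} (hs : BddAbove s) : sSup s ≤ 0 ↔ ∀ x ∈ s, x ≤ 0 :=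
  ⟨fun h _ hx => (le_csSup hs hx).trans h, Real.sSup_nonpos⟩

namespace Qset

variable {N : ℕ} {p : Fin N → ℝ} {α : ℝ} {q : Fin N → ℝ}

theorem apply_le_one (hq : q ∈ Qset N p α) (i : Fin N) : q i ≤ 1 :=
  hq.2.1 ▸ single_le_sum (fun j _ => hq.1 j) (mem_univ i)

theorem natCast_pos (hq : q ∈ Qset N p α) : (0 : ℝ) < N := by
  rcases N.eq_zero_or_pos with rfl | hN
  · simpa using hq.2.1
  · exact_mod_cast hN

theorem bddAbove_cvarObjective_image (X : Fin N → ℝ) :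
    BddAbove ((fun q : Fin N → ℝ => (1 / (N : ℝ)) * ∑ i, (-q i) * X i) '' Qset N p α) := by
  refine ⟨(1 / (N : ℝ)) * ∑ i, |X i|, ?_⟩
  rintro _ ⟨q, hq, rfl⟩
  dsimp only
  gcongr with i
  calc -q i * X i ≤ q i * |X i| := by nlinarith [neg_abs_le (X i), hq.1 i]
    _ ≤ |X i| := mul_le_of_le_one_left (abs_nonneg _) (apply_le_one hq i)

end Qset

theorem CVaR_nonpos_iff {N : ℕ} {p : Fin N → ℝ} {α : ℝ} {X : Fin N → ℝ} :
    CVaR N p α X ≤ 0 ↔ ∀ q ∈ Qset N p α, 0 ≤ ∑ i, q i * X i := by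
  rw [CVaR, Real.sSup_nonpos_iff (Qset.bddAbove_cvarObjective_image X), Set.forall_mem_image]
  refine forall₂_congr fun q hq => ?_
  have hN := Qset.natCast_pos hq
  simp only [neg_mul, sum_neg_distrib, mul_neg, neg_nonpos]
  exact ⟨fun h => nonneg_of_mul_nonneg_right h (by positivity), fun h => by positivity⟩

theorem inner_sum_smul_sub_eq_sum_mul {ι E : Type*} [Fintype ι] [NormedAddCommGroup E]
    [InnerProductSpace ℝ E] (q : ι → ℝ) (hq : ∑ i, q i = 1) (d : ι → E) (x : E) (b : ℝ) :
    ⟪∑ i, q i • d i, x⟫ - b = ∑ i, q i * (⟪d i, x⟫ - b) := by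
  simp only [sum_inner, real_inner_smul_left, mul_sub, sum_sub_distrib, ← sum_mul, hq, one_mul]

theorem cvar_constraint_iff_robust_general
    (m N : ℕ) (p : Fin N → ℝ)
    (α : ℝ)
    (d : Fin N → EuclideanSpace ℝ (Fin m)) (b : ℝ)
    (x : EuclideanSpace ℝ (Fin m)) :
    CVaR N p α (fun i => ⟪d i, x⟫ - b) ≤ 0 ↔
      ∀ u ∈ convexHull ℝ
          {u : EuclideanSpace ℝ (Fin m) | ∃ q ∈ Qset N p α, u = ∑ i, q i • d i},
        b ≤ ⟪u, x⟫ := by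
  have halfSpace : Convex ℝ {u : EuclideanSpace ℝ (Fin m) | b ≤ ⟪u, x⟫} := by
    simpa only [innerₛₗ_apply_apply, real_inner_comm x] using
      convex_halfSpace_ge (innerₛₗ ℝ x).isLinear b
  change _ ↔ convexHull ℝ _ ⊆ {u | b ≤ ⟪u, x⟫}
  rw [halfSpace.convexHull_subset_iff, CVaR_nonpos_iff]
  refine ⟨fun h => ?_, fun h q hq => ?_⟩
  · rintro _ ⟨q, hq, rfl⟩
    simpa [← inner_sum_smul_sub_eq_sum_mul q hq.2.1] using h q hq
  · simpa [← inner_sum_smul_sub_eq_sum_mul q hq.2.1] using h ⟨q, hq, rfl⟩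

/-- Robust uncertainty-set reformulation of a single CVaR constraint:
`CVaR_α(⟨dᵢ, x⟩ - b) ≤ 0` iff `⟨u, x⟩ ≥ b` for all `u` in the convex hull of
`{D q : q ∈ Q_α}`. -/
theorem cvar_constraint_iff_robust
    (m N : ℕ) (hN : 1 ≤ N) (p : Fin N → ℝ)
    (hp : ∀ i, 0 ≤ p i) (hps : ∑ i, p i = 1)
    (α : ℝ) (hα : 0 < α) (hα1 : α ≤ 1)
    (d : Fin N → EuclideanSpace ℝ (Fin m)) (b : ℝ)
    (x : EuclideanSpace ℝ (Fin m)) :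
    CVaR N p α (fun i => ⟪d i, x⟫ - b) ≤ 0 ↔
      ∀ u ∈ convexHull ℝ
          {u : EuclideanSpace ℝ (Fin m) | ∃ q ∈ Qset N p α, u = ∑ i, q i • d i},
        b ≤ ⟪u, x⟫ :=
  cvar_constraint_iff_robust_general m N p α d b x
end
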